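/- For every profile (v_1, v_2) of M-restricted additive valuations of two agents over mixed items, the randomized allocation returned by RandMixed on this profile is ex-ante Pareto optimal and ex-ante utilitarian welfare maximizing among fractional allocations, and is ex-post Pareto optimal and ex-post utilitarian welfare maximizing among deterministic allocations. -/

import Mathlib

/-!
On truthful reports, RandMixed gives every item to an agent who values it most: items of `Q₁`
and `Q₂` go to the strictly higher bidder, and the two values agree on `Q₀ ∪ Q₃`. Hence every
allocation in the support attains the welfare `∑ⱼ maxᵢ vᵢ(eⱼ)`, which bounds the welfare of every
fractional allocation, so the implemented fractional allocation, an average of such allocations,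
attains it too. A welfare maximizer cannot be Pareto dominated, since a Pareto improvement would
strictly increase the welfare.
-/

open Finset

attribute [local instance] Classical.propDecidable

noncomputable section

/-- The bundle of agent `i` under deterministic allocation `A`. -/
def bundle {m n : ℕ} (A : Fin m → Fin n) (i : Fin n) : Finset (Fin m) :=
  Finset.univ.filter fun j => A j = i

/-- Additive value of a bundle. -/
def sval {m : ℕ} (f : Fin m → ℝ) (S : Finset (Fin m)) : ℝ := ∑ j ∈ S, f j

/-- Items on which both agents report value zero. -/
def mxQ0 {m : ℕ} (r : Fin 2 → Fin m → ℝ) : Finset (Fin m) :=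
  Finset.univ.filter fun q => r 0 q = 0 ∧ r 1 q = 0

/-- Items on which agent 1 reports strictly more than agent 2. -/
def mxQ1 {m : ℕ} (r : Fin 2 → Fin m → ℝ) : Finset (Fin m) :=
  Finset.univ.filter fun q => r 0 q > r 1 q

/-- Items on which agent 1 reports strictly less than agent 2. -/
def mxQ2 {m : ℕ} (r : Fin 2 → Fin m → ℝ) : Finset (Fin m) :=
  Finset.univ.filter fun q => r 0 q < r 1 q

/-- Items on which the two agents report the same nonzero value. -/
def mxQ3 {m : ℕ} (r : Fin 2 → Fin m → ℝ) : Finset (Fin m) :=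
  Finset.univ.filter fun q => r 0 q = r 1 q ∧ r 0 q ≠ 0

/-- The position of item `q ∈ Q₃` in the list of the items of `Q₃` sorted in nonincreasing
order of their (common reported) inherent value, ties broken by smallest index. -/
def mxRank {m : ℕ} (r : Fin 2 → Fin m → ℝ) (q : Fin m) : ℕ :=
  ((mxQ3 r).filter fun q' => r 0 q' > r 0 q ∨ (r 0 q' = r 0 q ∧ q' < q)).card

/-- The probability that mechanism `RandMixed`, on reported profile `r`, outputs the
deterministic allocation `A`: each item of `Q₀` goes independently to a uniformly random
agent, the items of `Q₁` (resp. `Q₂`) go to agent 1 (resp. agent 2), and the items of `Q₃`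
are allocated round-robin in nonincreasing inherent value according to a uniformly random
permutation of the two agents. -/
def randMixedProb {m : ℕ} (r : Fin 2 → Fin m → ℝ) (A : Fin m → Fin 2) : ℝ :=
  ((1 : ℝ) / 2) ^ (mxQ0 r).card *
    ((∑ σ : Equiv.Perm (Fin 2),
        if (∀ q ∈ mxQ1 r, A q = 0) ∧ (∀ q ∈ mxQ2 r, A q = 1) ∧
           (∀ q ∈ mxQ3 r, A q = σ ⟨mxRank r q % 2, Nat.mod_lt _ two_pos⟩)
        then (1 : ℝ) else 0)
      / (Fintype.card (Equiv.Perm (Fin 2)) : ℝ))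

/-- The expected utility, under `RandMixed` on reported profile `r`, of agent `i` whose true
additive valuation is `vi`. -/
def randMixedExp {m : ℕ} (r : Fin 2 → Fin m → ℝ) (vi : Fin m → ℝ) (i : Fin 2) : ℝ :=
  ∑ A : Fin m → Fin 2, randMixedProb r A * sval vi (bundle A i)

/-- `a` is a fractional allocation. -/
def IsFrac {m n : ℕ} (a : Fin m → Fin n → ℝ) : Prop :=
  (∀ j i, 0 ≤ a j i) ∧ ∀ j, ∑ i, a j i = 1

/-- The fractional allocation implemented by the randomized allocation `p`. -/
def implFrac {m n : ℕ} (p : (Fin m → Fin n) → ℝ) : Fin m → Fin n → ℝ :=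
  fun j i => ∑ A, p A * (if A j = i then 1 else 0)

/-- Value of agent with item values `vi` for the fractional bundle of agent `i` in `a`. -/
def fval {m n : ℕ} (vi : Fin m → ℝ) (a : Fin m → Fin n → ℝ) (i : Fin n) : ℝ :=
  ∑ j, a j i * vi j

/-- Deterministic allocation `B` Pareto dominates `A`. -/
def ParetoDom {m n : ℕ} (v : Fin n → Fin m → ℝ) (B A : Fin m → Fin n) : Prop :=
  (∀ i, sval (v i) (bundle B i) ≥ sval (v i) (bundle A i)) ∧
  ∃ i, sval (v i) (bundle B i) > sval (v i) (bundle A i)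

section Welfare

variable {m n : ℕ} (w : Fin n → Fin m → ℝ)

theorem sum_sval_bundle (A : Fin m → Fin n) :
    ∑ i, sval (w i) (bundle A i) = ∑ j, w (A j) j := by
  rw [← sum_fiberwise univ A fun j => w (A j) j]
  refine sum_congr rfl fun i _ => sum_congr rfl fun j hj => ?_
  rw [(mem_filter.mp hj).2]

theorem sum_sval_bundle_le {A : Fin m → Fin n} (hA : ∀ i j, w i j ≤ w (A j) j)
    (B : Fin m → Fin n) :
    ∑ i, sval (w i) (bundle B i) ≤ ∑ i, sval (w i) (bundle A i) := by
  simp only [sum_sval_bundle]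
  exact sum_le_sum fun j _ => hA _ _

theorem sum_fval_le_of_isFrac {A : Fin m → Fin n} (hA : ∀ i j, w i j ≤ w (A j) j)
    {b : Fin m → Fin n → ℝ} (hb : IsFrac b) :
    ∑ i, fval (w i) b i ≤ ∑ i, sval (w i) (bundle A i) :=
  calc ∑ i, fval (w i) b i = ∑ j, ∑ i, b j i * w i j := sum_comm
    _ ≤ ∑ j, ∑ i, b j i * w (A j) j :=
      sum_le_sum fun j _ => sum_le_sum fun i _ => mul_le_mul_of_nonneg_left (hA i j) (hb.1 j i)
    _ = ∑ i, sval (w i) (bundle A i) := by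
      simp only [← sum_mul, hb.2, one_mul, sum_sval_bundle]

theorem sum_fval_implFrac (p : (Fin m → Fin n) → ℝ) :
    ∑ i, fval (w i) (implFrac p) i = ∑ A, p A * ∑ i, sval (w i) (bundle A i) :=
  calc ∑ i, fval (w i) (implFrac p) i = ∑ j, ∑ A, p A * w (A j) j := by
        simp only [fval, implFrac, sum_mul]
        rw [sum_comm]
        refine sum_congr rfl fun j _ => ?_
        rw [sum_comm]
        simp [ite_mul]
    _ = ∑ A, p A * ∑ i, sval (w i) (bundle A i) := by
        simp only [sum_sval_bundle, mul_sum]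
        exact sum_comm

theorem sum_fval_le_sum_fval_implFrac {p : (Fin m → Fin n) → ℝ} (hp0 : ∀ A, 0 ≤ p A)
    (hp1 : ∑ A, p A = 1) (hsupp : ∀ A, 0 < p A → ∀ i j, w i j ≤ w (A j) j)
    {b : Fin m → Fin n → ℝ} (hb : IsFrac b) :
    ∑ i, fval (w i) b i ≤ ∑ i, fval (w i) (implFrac p) i :=
  calc ∑ i, fval (w i) b i = ∑ A, p A * ∑ i, fval (w i) b i := by rw [← sum_mul, hp1, one_mul]
    _ ≤ ∑ A, p A * ∑ i, sval (w i) (bundle A i) := by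
      refine sum_le_sum fun A _ => ?_
      rcases (hp0 A).eq_or_lt with h | h
      · simp [← h]
      · exact mul_le_mul_of_nonneg_left (sum_fval_le_of_isFrac w (hsupp A h) hb) h.le
    _ = ∑ i, fval (w i) (implFrac p) i := (sum_fval_implFrac w p).symm

end Welfare

theorem not_paretoImprovement_of_sum_le {ι α : Type*} [Fintype ι] (u : ι → α → ℝ) {x y : α}
    (h : ∑ i, u i y ≤ ∑ i, u i x) : ¬ ((∀ i, u i y ≥ u i x) ∧ ∃ i, u i y > u i x) := by
  rintro ⟨hge, i, hgt⟩
  exact h.not_gt (sum_lt_sum (fun i _ => hge i) ⟨i, mem_univ i, hgt⟩)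

section RandMixed

variable {m : ℕ} (r : Fin 2 → Fin m → ℝ)

def RandMixedOutcome (σ : Equiv.Perm (Fin 2)) (A : Fin m → Fin 2) : Prop :=
  (∀ q ∈ mxQ1 r, A q = 0) ∧ (∀ q ∈ mxQ2 r, A q = 1) ∧
    ∀ q ∈ mxQ3 r, A q = σ ⟨mxRank r q % 2, Nat.mod_lt _ two_pos⟩

theorem randMixedProb_eq (A : Fin m → Fin 2) :
    randMixedProb r A =
      (1 / 2) ^ #(mxQ0 r) * ((∑ σ, if RandMixedOutcome r σ A then 1 else 0) / 2) := by
  simp only [randMixedProb, Fintype.card_perm, Fintype.card_fin, Nat.factorial_two,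
    Nat.cast_ofNat]
  congr!

theorem randMixedProb_nonneg (A : Fin m → Fin 2) : 0 ≤ randMixedProb r A := by
  rw [randMixedProb_eq]
  positivity

theorem exists_randMixedOutcome_of_randMixedProb_pos {A : Fin m → Fin 2}
    (hA : 0 < randMixedProb r A) : ∃ σ, RandMixedOutcome r σ A := by
  by_contra! h
  simp [randMixedProb_eq, h] at hA

theorem RandMixedOutcome.le_apply {r : Fin 2 → Fin m → ℝ} {σ : Equiv.Perm (Fin 2)}
    {A : Fin m → Fin 2} (hA : RandMixedOutcome r σ A) (i : Fin 2) (j : Fin m) :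
    r i j ≤ r (A j) j := by
  rcases lt_trichotomy (r 0 j) (r 1 j) with h | h | h
  · rw [hA.2.1 j (by simpa [mxQ2] using h)]
    fin_cases i <;> simp [h.le]
  · have hr : ∀ k : Fin 2, r k j = r 0 j := fun k => by fin_cases k <;> simp [h]
    rw [hr i, hr (A j)]
  · rw [hA.1 j (by simpa [mxQ1] using h)]
    fin_cases i <;> simp [h.le]

theorem card_randMixedOutcome (σ : Equiv.Perm (Fin 2)) :
    #(univ.filter (RandMixedOutcome r σ)) = 2 ^ #(mxQ0 r) := by
  let t : Fin m → Finset (Fin 2) := fun j =>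
    if j ∈ mxQ1 r then {0} else if j ∈ mxQ2 r then {1}
    else if j ∈ mxQ3 r then {σ ⟨mxRank r j % 2, Nat.mod_lt _ two_pos⟩} else univ
  have ht : univ.filter (RandMixedOutcome r σ) = Fintype.piFinset t := by
    ext A
    simp only [mem_filter, mem_univ, true_and, Fintype.mem_piFinset, t, RandMixedOutcome]
    constructor
    · rintro ⟨h1, h2, h3⟩ j
      split_ifs with hj1 hj2 hj3 <;> simp [*]
    · intro h
      refine ⟨fun q hq => by simpa [hq] using h q, fun q hq => ?_, fun q hq => ?_⟩
      · have hq1 : q ∉ mxQ1 r := by simp_all [mxQ1, mxQ2]; linarith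
        simpa [hq, hq1] using h q
      · have hq1 : q ∉ mxQ1 r := by simp_all [mxQ1, mxQ3]
        have hq2 : q ∉ mxQ2 r := by simp_all [mxQ2, mxQ3]
        simpa [hq, hq1, hq2] using h q
  have hcard : ∀ j, #(t j) = if j ∈ mxQ0 r then 2 else 1 := by
    intro j
    simp only [t, mxQ0, mxQ1, mxQ2, mxQ3, mem_filter, mem_univ, true_and]
    split_ifs <;> simp <;> grind
  rw [ht, Fintype.card_piFinset, Finset.prod_congr rfl fun j _ => hcard j, prod_ite]
  simp

theorem sum_randMixedProb : ∑ A, randMixedProb r A = 1 := by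
  simp only [randMixedProb_eq, ← sum_div, ← mul_sum]
  rw [sum_comm]
  simp [sum_boole, card_randMixedOutcome, Fintype.card_perm]

end RandMixed

theorem randMixed_BoBW_efficiency_general (m : ℕ)
    (v : Fin 2 → Fin m → ℝ) :
    -- ex-ante Pareto optimality among fractional allocations
    (¬ ∃ b : Fin m → Fin 2 → ℝ, IsFrac b ∧
        (∀ i, fval (v i) b i ≥ fval (v i) (implFrac (randMixedProb v)) i) ∧
        ∃ i, fval (v i) b i > fval (v i) (implFrac (randMixedProb v)) i) ∧
    -- ex-ante utilitarian welfare maximization among fractional allocations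
    (∀ b : Fin m → Fin 2 → ℝ, IsFrac b →
        ∑ i, fval (v i) b i ≤ ∑ i, fval (v i) (implFrac (randMixedProb v)) i) ∧
    -- ex-post Pareto optimality
    (∀ A : Fin m → Fin 2, 0 < randMixedProb v A →
        ¬ ∃ B : Fin m → Fin 2, ParetoDom v B A) ∧
    -- ex-post utilitarian welfare maximization
    (∀ A : Fin m → Fin 2, 0 < randMixedProb v A → ∀ B : Fin m → Fin 2,
        ∑ i, sval (v i) (bundle B i) ≤ ∑ i, sval (v i) (bundle A i)) := by
  have hsupp : ∀ A, 0 < randMixedProb v A → ∀ i j, v i j ≤ v (A j) j := fun A hA =>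
    (exists_randMixedOutcome_of_randMixedProb_pos v hA).elim fun _ hσ => hσ.le_apply
  have hwelfare : ∀ b : Fin m → Fin 2 → ℝ, IsFrac b →
      ∑ i, fval (v i) b i ≤ ∑ i, fval (v i) (implFrac (randMixedProb v)) i := fun _ hb =>
    sum_fval_le_sum_fval_implFrac v (randMixedProb_nonneg v) (sum_randMixedProb v) hsupp hb
  refine ⟨?_, hwelfare, ?_, fun A hA => sum_sval_bundle_le v (hsupp A hA)⟩
  · rintro ⟨b, hb, hdom⟩
    exact not_paretoImprovement_of_sum_le (fun i b => fval (v i) b i) (hwelfare b hb) hdom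
  · rintro A hA ⟨B, hdom⟩
    exact not_paretoImprovement_of_sum_le (fun i B => sval (v i) (bundle B i))
      (sum_sval_bundle_le v (hsupp A hA) B) hdom

/-- on any truthful M-restricted additive mixed-items profile for two agents,
`RandMixed` is ex-ante PO and UWM among fractional allocations, and ex-post PO and UWM
among deterministic allocations. -/
theorem randMixed_BoBW_efficiency (m : ℕ)
    (c g : Fin m → ℝ) (hc : ∀ q, 0 < c q) (hg : ∀ q, 0 < g q)
    (v : Fin 2 → Fin m → ℝ) (hv : ∀ i q, v i q = -c q ∨ v i q = 0 ∨ v i q = g q) :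
    -- ex-ante Pareto optimality among fractional allocations
    (¬ ∃ b : Fin m → Fin 2 → ℝ, IsFrac b ∧
        (∀ i, fval (v i) b i ≥ fval (v i) (implFrac (randMixedProb v)) i) ∧
        ∃ i, fval (v i) b i > fval (v i) (implFrac (randMixedProb v)) i) ∧
    -- ex-ante utilitarian welfare maximization among fractional allocations
    (∀ b : Fin m → Fin 2 → ℝ, IsFrac b →
        ∑ i, fval (v i) b i ≤ ∑ i, fval (v i) (implFrac (randMixedProb v)) i) ∧
    -- ex-post Pareto optimality
    (∀ A : Fin m → Fin 2, 0 < randMixedProb v A →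
        ¬ ∃ B : Fin m → Fin 2, ParetoDom v B A) ∧
    -- ex-post utilitarian welfare maximization
    (∀ A : Fin m → Fin 2, 0 < randMixedProb v A → ∀ B : Fin m → Fin 2,
        ∑ i, sval (v i) (bundle B i) ≤ ∑ i, sval (v i) (bundle A i)) :=
  randMixed_BoBW_efficiency_general m v
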